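/- For every d ≥ 0 and every d-ascent sequence α, the word hat_d(α) is a Cayley permutation satisfying Asc_d(α) = nub(hat_d(α)) and asc_d(α) = max(hat_d(α)). -/

import Mathlib

/-- Entry of the word `w` at (1-based) position `i`. -/
def ent (w : List ℕ) (i : ℕ) : ℕ := w.getD (i - 1) 0

/-- `w` is an endofunction of `{1,…,n}`, where `n = w.length`. -/
def IsEndo (w : List ℕ) : Prop := ∀ x ∈ w, 1 ≤ x ∧ x ≤ w.length

/-- `w` is an inversion sequence. -/
def IsInvSeq (w : List ℕ) : Prop :=
  ∀ i ∈ Finset.Icc 1 w.length, 1 ≤ ent w i ∧ ent w i ≤ i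

/-- The set of `d`-ascents of `w` (1-based positions): position `1` is always a
`d`-ascent, and `i ≥ 2` is a `d`-ascent if `a_i > a_{i-1} - d`. -/
def ascSet (d : ℕ) (w : List ℕ) : Finset ℕ :=
  (Finset.Icc 1 w.length).filter fun i => i = 1 ∨ ent w (i - 1) < ent w i + d

/-- The number of `d`-ascents of `w`. -/
def ascCard (d : ℕ) (w : List ℕ) : ℕ := (ascSet d w).card

/-- `w` is a `d`-ascent sequence. -/
def IsDAscSeq (d : ℕ) (w : List ℕ) : Prop :=
  IsEndo w ∧ ∀ i ∈ Finset.Icc 1 w.length, ent w i ≤ 1 + ascCard d (w.take (i - 1))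

/-- One step of the map `M`: add one to every entry strictly to the left of
position `j` that is weakly larger than the entry in position `j`. -/
def Mstep (w : List ℕ) (j : ℕ) : List ℕ :=
  w.mapIdx fun k x => if k + 1 < j ∧ ent w j ≤ x then x + 1 else x

/-- The `d`-hat map: apply `Mstep` successively at the `d`-ascents of `w`,
listed in increasing order. -/
def hatd (d : ℕ) (w : List ℕ) : List ℕ :=
  ((ascSet d w).sort (· ≤ ·)).foldl Mstep w

/-- Largest entry of `w`. -/
def maxEnt (w : List ℕ) : ℕ := w.foldr max 0

/-- `w` is a Cayley permutation: its image is `{1,…,max w}`. -/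
def IsCayley (w : List ℕ) : Prop := ∀ x, x ∈ w ↔ (1 ≤ x ∧ x ≤ maxEnt w)

open Classical in
/-- The set of positions of leftmost copies of the values of `w`. -/
noncomputable def nubSet (w : List ℕ) : Finset ℕ :=
  (Finset.Icc 1 w.length).filter fun i =>
    ∀ j ∈ Finset.Icc 1 w.length, ent w j = ent w i → i ≤ j

/-- The least `d` such that `w` is a `d`-ascent sequence. -/
noncomputable def mind (w : List ℕ) : ℕ := sInf {d | IsDAscSeq d w}

/-- The set `H(w)` of all the (meaningful) `d`-hats of `w`. -/
def Hset (w : List ℕ) : Set (List ℕ) := {x | ∃ d, mind w ≤ d ∧ x = hatd d w}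

/-- The max-hat map. -/
def hatmax (w : List ℕ) : List ℕ := hatd (w.length - 1) w

/-- Weak descent set of `w`. -/
def wDesSet (w : List ℕ) : Finset ℕ :=
  (Finset.Icc 2 w.length).filter fun i => ent w i ≤ ent w (i - 1)

/-- The number of weak descents of `w`. -/
def wdes (w : List ℕ) : ℕ := (wDesSet w).card

/-- `i` is a right-left minimum index of `w`. -/
def IsRLMinIdx (w : List ℕ) (i : ℕ) : Prop :=
  1 ≤ i ∧ i ≤ w.length ∧ ∀ j, i < j → j ≤ w.length → ent w i < ent w j

/-- The set of right-left minima pairs of `w`. -/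
def rlMinP (w : List ℕ) : Set (ℕ × ℕ) :=
  {p | IsRLMinIdx w p.1 ∧ p.2 = ent w p.1}

/-- `w` is the word of a permutation of `{1,…,n}`, where `n = w.length`. -/
def IsPermWord (w : List ℕ) : Prop :=
  w.Nodup ∧ ∀ x ∈ w, 1 ≤ x ∧ x ≤ w.length

/-- Add one to every entry of `w` that is `≥ a`. -/
def plus (w : List ℕ) (a : ℕ) : List ℕ :=
  w.map fun x => if a ≤ x then x + 1 else x

/-- Add one to every entry of `w` that is `≥ a`, then append `a` at the end. -/
def plusApp (w : List ℕ) (a : ℕ) : List ℕ := plus w a ++ [a]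

/-- The index of the maximal increasing run of `w` containing position `i`:
one plus the number of descents up to position `i`. -/
def irIdx (w : List ℕ) (i : ℕ) : ℕ :=
  1 + ((Finset.Icc 2 i).filter fun j => ent w j < ent w (j - 1)).card

/-- `w` is ir-subdiagonal: every entry `c` in the `i`th maximal increasing run
satisfies `c ≤ n + 1 - i`. -/
def IsIrSub (w : List ℕ) : Prop :=
  ∀ i ∈ Finset.Icc 1 w.length, ent w i + irIdx w i ≤ w.length + 1

/-- The index of the maximal decreasing run of `w` containing position `i`. -/
def drIdx (w : List ℕ) (i : ℕ) : ℕ :=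
  1 + ((Finset.Icc 2 i).filter fun j => ent w (j - 1) < ent w j).card

/-- `w` is dr-subdiagonal: every entry `c` in the `i`th maximal decreasing run
satisfies `c ≤ n + 1 - i`. -/
def IsDrSub (w : List ℕ) : Prop :=
  ∀ i ∈ Finset.Icc 1 w.length, ent w i + drIdx w i ≤ w.length + 1

/-- `w` is a weak descent sequence. -/
def IsWDesSeq (w : List ℕ) : Prop :=
  IsInvSeq w ∧ ∀ i ∈ Finset.Icc 1 w.length, ent w i ≤ 1 + wdes (w.take (i - 1))

/-- `w` is a primitive ascent sequence: an ascent sequence with no flat steps. -/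
def IsPrimAscSeq (w : List ℕ) : Prop :=
  IsDAscSeq 0 w ∧ ∀ i ∈ Finset.Icc 1 (w.length - 1), ent w i ≠ ent w (i + 1)

/-- Insert position `i` into a list of positions sorted by the Burge order:
ascending entries, ties broken by descending position. -/
def bInsert (w : List ℕ) (i : ℕ) : List ℕ → List ℕ
  | [] => [i]
  | j :: t =>
      if ent w i < ent w j ∨ (ent w i = ent w j ∧ j ≤ i) then i :: j :: t
      else j :: bInsert w i t

/-- The permutation `burget w` obtained from the Burge transpose of the biword
with top row `1,…,n` and bottom row `w`: sort the positions `1,…,n` in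
ascending order of their entries, breaking ties in descending order of
position. -/
def burget (w : List ℕ) : List ℕ :=
  ((List.range w.length).map (· + 1)).foldr (bInsert w) []

-- ===== auxiliary lemmas =====

lemma length_Mstep (w : List ℕ) (j : ℕ) : (Mstep w j).length = w.length := by
  simp [Mstep]

lemma length_foldl_Mstep (l : List ℕ) (w : List ℕ) :
    (l.foldl Mstep w).length = w.length := by
  induction l generalizing w with
  | nil => rfl
  | cons a t ih => rw [List.foldl_cons, ih, length_Mstep]

lemma length_hatd (d : ℕ) (w : List ℕ) : (hatd d w).length = w.length :=
  length_foldl_Mstep _ _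

lemma ent_eq_getElem (w : List ℕ) (i : ℕ) (h : i - 1 < w.length) :
    ent w i = w[i-1] := List.getD_eq_getElem _ _ h

lemma ent_mem (w : List ℕ) (i : ℕ) (h1 : 1 ≤ i) (h2 : i ≤ w.length) : ent w i ∈ w := by
  have h : i - 1 < w.length := by omega
  rw [ent_eq_getElem w i h]
  exact List.getElem_mem _

lemma mem_iff_ent {l : List ℕ} {x : ℕ} :
    x ∈ l ↔ ∃ j, 1 ≤ j ∧ j ≤ l.length ∧ ent l j = x := by
  constructor
  · intro h
    obtain ⟨n, hn, he⟩ := List.getElem_of_mem h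
    refine ⟨n + 1, by omega, by omega, ?_⟩
    rw [ent_eq_getElem _ _ (by simpa using hn)]
    simpa using he
  · rintro ⟨j, h1, h2, rfl⟩
    exact ent_mem _ _ h1 h2

lemma ent_append_left (u v : List ℕ) (i : ℕ) (h1 : 1 ≤ i) (h2 : i ≤ u.length) :
    ent (u ++ v) i = ent u i := by
  have h : i - 1 < u.length := by omega
  have h' : i - 1 < (u ++ v).length := by simp; omega
  rw [ent_eq_getElem _ i h', ent_eq_getElem u i h, List.getElem_append_left h]

lemma ent_append_last (u : List ℕ) (b : ℕ) :
    ent (u ++ [b]) (u.length + 1) = b := by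
  have h' : u.length + 1 - 1 < (u ++ [b]).length := by simp
  rw [ent_eq_getElem _ _ h']
  simp

lemma ent_take (w : List ℕ) (m j : ℕ) (h1 : 1 ≤ j) (h2 : j ≤ m) :
    ent (w.take m) j = ent w j := by
  unfold ent
  rcases lt_or_ge (j - 1) (w.take m).length with h | h
  · rw [List.getD_eq_getElem _ _ h,
      List.getD_eq_getElem _ _ (by simp at h; omega), List.getElem_take]
  · rw [List.getD_eq_default _ _ h, List.getD_eq_default]
    simp at h ⊢
    omega

lemma mem_ascSet {d : ℕ} {w : List ℕ} {i : ℕ} :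
    i ∈ ascSet d w ↔ (1 ≤ i ∧ i ≤ w.length) ∧ (i = 1 ∨ ent w (i-1) < ent w i + d) := by
  simp [ascSet, Finset.mem_filter, Finset.mem_Icc]

lemma ascSet_bound {d : ℕ} {w : List ℕ} {i : ℕ} (h : i ∈ ascSet d w) :
    1 ≤ i ∧ i ≤ w.length := (mem_ascSet.1 h).1

lemma ascCard_le_length (d : ℕ) (v : List ℕ) : ascCard d v ≤ v.length := by
  unfold ascCard ascSet
  calc ((Finset.Icc 1 v.length).filter _).card ≤ (Finset.Icc 1 v.length).card :=
        Finset.card_filter_le _ _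
    _ = v.length := by rw [Nat.card_Icc]; omega

lemma Mstep_append (u : List ℕ) (b : ℕ) (j : ℕ) (h1 : 1 ≤ j) (h2 : j ≤ u.length) :
    Mstep (u ++ [b]) j = Mstep u j ++ [b] := by
  unfold Mstep
  rw [ent_append_left u [b] j h1 h2, List.mapIdx_append]
  congr 1
  have hcond : ¬ (0 + u.length + 1 < j ∧ ent u j ≤ b) := by omega
  simp [List.mapIdx_cons, hcond]
  omega

lemma Mstep_last (u : List ℕ) (b : ℕ) :
    Mstep (u ++ [b]) (u.length + 1) = plus u b ++ [b] := by
  unfold Mstep plus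
  rw [ent_append_last, List.mapIdx_append]
  congr 1
  · apply List.ext_getElem (by simp)
    intro n hn1 hn2
    simp only [List.getElem_mapIdx, List.getElem_map]
    have : n + 1 < u.length + 1 := by simp at hn2; omega
    simp [this]
  · simp

lemma foldl_Mstep_append (l : List ℕ) (u : List ℕ) (b : ℕ)
    (hl : ∀ j ∈ l, 1 ≤ j ∧ j ≤ u.length) :
    l.foldl Mstep (u ++ [b]) = l.foldl Mstep u ++ [b] := by
  induction l generalizing u with
  | nil => rfl
  | cons a t ih =>
    rw [List.foldl_cons, List.foldl_cons,
      Mstep_append u b a (hl a (by simp)).1 (hl a (by simp)).2]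
    exact ih (Mstep u a) (fun j hj => by
      rw [length_Mstep]; exact hl j (by simp [hj]))

lemma sort_insert_max (s : Finset ℕ) (a : ℕ) (h : ∀ x ∈ s, x < a) :
    (insert a s).sort (· ≤ ·) = s.sort (· ≤ ·) ++ [a] := by
  have ha : a ∉ s := fun hmem => absurd (h a hmem) (lt_irrefl a)
  refine (fun hp hs => List.Perm.eq_of_pairwise' (Finset.pairwise_sort _ _) hs hp) ?_ ?_
  · exact (Finset.sort_perm_toList _ _).trans
      ((Finset.toList_insert ha).trans
        ((((Finset.sort_perm_toList (r := (· ≤ ·)) (s := s)).symm.cons a)).trans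
          (List.perm_append_singleton a _).symm))
  · rw [List.pairwise_append]
    refine ⟨Finset.pairwise_sort _ _, List.pairwise_singleton _ _, ?_⟩
    intro x hx y hy
    simp at hy
    subst hy
    exact le_of_lt (h x ((Finset.mem_sort _).1 hx))

lemma ascSet_append (d : ℕ) (u : List ℕ) (b : ℕ) :
    ascSet d (u ++ [b]) =
      if u.length = 0 ∨ ent u u.length < b + d then insert (u.length + 1) (ascSet d u)
      else ascSet d u := by
  have hlast : (u.length + 1) ∈ ascSet d (u ++ [b]) ↔
      (u.length = 0 ∨ ent u u.length < b + d) := by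
    rw [mem_ascSet]
    rcases Nat.eq_zero_or_pos u.length with h | h
    · have hu : u = [] := List.length_eq_zero_iff.1 h
      subst hu
      simp
    · rw [show u.length + 1 - 1 = u.length by omega, ent_append_last,
        ent_append_left u [b] u.length h le_rfl]
      constructor
      · rintro ⟨_, (h1 | h2)⟩
        · omega
        · exact Or.inr h2
      · intro hor
        refine ⟨⟨by omega, by simp⟩, ?_⟩
        rcases hor with h0 | hP
        · omega
        · exact Or.inr hP
  have hleft : ∀ i, 1 ≤ i → i ≤ u.length →
      (i ∈ ascSet d (u ++ [b]) ↔ i ∈ ascSet d u) := by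
    intro i h1 h2
    by_cases hone : i = 1
    · subst hone
      rw [mem_ascSet, mem_ascSet]
      simp
      omega
    · rw [mem_ascSet, mem_ascSet,
        ent_append_left u [b] i h1 h2,
        ent_append_left u [b] (i-1) (by omega) (by omega)]
      simp only [List.length_append, List.length_singleton]
      constructor
      · rintro ⟨⟨a1, a2⟩, hP⟩; exact ⟨⟨a1, h2⟩, hP⟩
      · rintro ⟨⟨a1, a2⟩, hP⟩; exact ⟨⟨a1, by omega⟩, hP⟩
  ext i
  by_cases hc : u.length = 0 ∨ ent u u.length < b + d
  · rw [if_pos hc, Finset.mem_insert]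
    constructor
    · intro h
      obtain ⟨h1, h2⟩ := ascSet_bound h
      simp at h2
      rcases Nat.lt_or_ge i (u.length + 1) with hi | hi
      · exact Or.inr ((hleft i h1 (by omega)).1 h)
      · left; omega
    · rintro (rfl | h)
      · exact hlast.2 hc
      · obtain ⟨h1, h2⟩ := ascSet_bound h
        exact (hleft i h1 h2).2 h
  · rw [if_neg hc]
    constructor
    · intro h
      obtain ⟨h1, h2⟩ := ascSet_bound h
      simp at h2
      rcases Nat.lt_or_ge i (u.length + 1) with hi | hi
      · exact (hleft i h1 (by omega)).1 h
      · exact absurd (hlast.1 (by rwa [show i = u.length + 1 by omega] at h)) hc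
    · intro h
      obtain ⟨h1, h2⟩ := ascSet_bound h
      exact (hleft i h1 h2).2 h

lemma hatd_append (d : ℕ) (u : List ℕ) (b : ℕ) :
    hatd d (u ++ [b]) =
      if u.length = 0 ∨ ent u u.length < b + d then plus (hatd d u) b ++ [b]
      else hatd d u ++ [b] := by
  have hb : ∀ j ∈ (ascSet d u).sort (· ≤ ·), 1 ≤ j ∧ j ≤ u.length :=
    fun j hj => ascSet_bound ((Finset.mem_sort _).1 hj)
  unfold hatd
  rw [ascSet_append]
  by_cases hc : u.length = 0 ∨ ent u u.length < b + d
  · rw [if_pos hc, if_pos hc,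
      sort_insert_max _ _ (fun x hx => by have := ascSet_bound hx; omega),
      List.foldl_append, foldl_Mstep_append _ _ _ hb]
    have hl : u.length = (List.foldl Mstep u ((ascSet d u).sort (· ≤ ·))).length :=
      (length_foldl_Mstep _ _).symm
    rw [List.foldl_cons, List.foldl_nil, hl, Mstep_last]
  · rw [if_neg hc, if_neg hc, foldl_Mstep_append _ _ _ hb]

lemma le_maxEnt {w : List ℕ} {x : ℕ} (h : x ∈ w) : x ≤ maxEnt w := by
  induction w with
  | nil => simp at h
  | cons a t ih =>
    rcases List.mem_cons.1 h with rfl | h'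
    · exact le_max_left _ _
    · exact le_trans (ih h') (le_max_right _ _)

lemma maxEnt_le {w : List ℕ} {m : ℕ} (h : ∀ x ∈ w, x ≤ m) : maxEnt w ≤ m := by
  induction w with
  | nil => simp [maxEnt]
  | cons a t ih =>
    have : max a (maxEnt t) ≤ m :=
      max_le (h a (by simp)) (ih (fun x hx => h x (by simp [hx])))
    exact this

lemma maxEnt_eq' {l : List ℕ} {m : ℕ} (h : ∀ x, x ∈ l ↔ 1 ≤ x ∧ x ≤ m) :
    maxEnt l = m := by
  rcases Nat.eq_zero_or_pos m with rfl | hm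
  · have : l = [] := List.eq_nil_iff_forall_not_mem.2
      (fun x hx => by have := (h x).1 hx; omega)
    simp [this, maxEnt]
  · exact le_antisymm (maxEnt_le fun x hx => ((h x).1 hx).2)
      (le_maxEnt ((h m).2 ⟨hm, le_rfl⟩))

lemma length_plus (w : List ℕ) (b : ℕ) : (plus w b).length = w.length := by
  simp [plus]

lemma ent_plus (w : List ℕ) (b : ℕ) (i : ℕ) (h1 : 1 ≤ i) (h2 : i ≤ w.length) :
    ent (plus w b) i = if b ≤ ent w i then ent w i + 1 else ent w i := by
  have h : i - 1 < w.length := by omega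
  have h' : i - 1 < (plus w b).length := by rw [length_plus]; omega
  rw [ent_eq_getElem _ i h', ent_eq_getElem w i h]
  simp [plus]

lemma mem_plusApp_iff {w : List ℕ} {k b : ℕ} (hcay : ∀ x, x ∈ w ↔ 1 ≤ x ∧ x ≤ k)
    (hb1 : 1 ≤ b) (hb2 : b ≤ k + 1) :
    ∀ x, x ∈ plus w b ++ [b] ↔ 1 ≤ x ∧ x ≤ k + 1 := by
  intro x
  simp only [plus, List.mem_append, List.mem_map, List.mem_singleton]
  constructor
  · rintro (⟨y, hy, rfl⟩ | rfl)
    · have := (hcay y).1 hy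
      split <;> omega
    · omega
  · rintro ⟨h1, h2⟩
    by_cases hxb : x = b
    · right; exact hxb
    · left
      rcases Nat.lt_or_ge x b with hlt | hge
      · exact ⟨x, (hcay x).2 ⟨h1, by omega⟩, by rw [if_neg (by omega)]⟩
      · refine ⟨x - 1, (hcay _).2 ⟨by omega, by omega⟩, ?_⟩
        rw [if_pos (by omega)]
        omega

lemma mem_nubSet {w : List ℕ} {i : ℕ} :
    i ∈ nubSet w ↔ (1 ≤ i ∧ i ≤ w.length) ∧
      ∀ j, 1 ≤ j → j ≤ w.length → ent w j = ent w i → i ≤ j := by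
  simp [nubSet, Finset.mem_Icc]

lemma mem_ascSet_take {d : ℕ} {w : List ℕ} {m i : ℕ} :
    i ∈ ascSet d (w.take m) ↔
      (1 ≤ i ∧ i ≤ m ∧ i ≤ w.length ∧ (i = 1 ∨ ent w (i-1) < ent w i + d)) := by
  rw [mem_ascSet]
  by_cases hb : 1 ≤ i ∧ i ≤ m ∧ i ≤ w.length
  · obtain ⟨h1, h2, h3⟩ := hb
    by_cases h4 : i = 1
    · subst h4
      simp [List.length_take]
    · rw [ent_take w m i h1 h2, ent_take w m (i-1) (by omega) (by omega)]
      simp only [List.length_take]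
      constructor
      · rintro ⟨⟨a1, a2⟩, hP⟩; exact ⟨a1, h2, h3, hP⟩
      · rintro ⟨a1, a2, a3, hP⟩; exact ⟨⟨a1, by omega⟩, hP⟩
  · constructor
    · rintro ⟨⟨a1, a2⟩, _⟩
      simp only [List.length_take] at a2
      exact absurd ⟨a1, by omega, by omega⟩ hb
    · rintro ⟨a1, a2, a3, _⟩
      exact absurd ⟨a1, a2, a3⟩ hb

lemma ascSet_take_mono {d : ℕ} {w : List ℕ} {m m' : ℕ} (h : m ≤ m') :
    ascSet d (w.take m) ⊆ ascSet d (w.take m') := by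
  intro i hi
  rw [mem_ascSet_take] at hi ⊢
  exact ⟨hi.1, by omega, hi.2.2⟩

lemma isDAscSeq_prefix {d : ℕ} {u : List ℕ} {b : ℕ}
    (hw : IsDAscSeq d (u ++ [b])) : IsDAscSeq d u := by
  obtain ⟨he, hc⟩ := hw
  have key : ∀ i, 1 ≤ i → i ≤ u.length →
      ent u i ≤ 1 + ascCard d (u.take (i-1)) := by
    intro i h1 h2
    have hi : i ∈ Finset.Icc 1 (u ++ [b]).length :=
      Finset.mem_Icc.2 ⟨h1, by simp; omega⟩
    have := hc i hi
    rwa [ent_append_left u [b] i h1 h2,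
      List.take_append_of_le_length (by omega)] at this
  constructor
  · intro x hx
    refine ⟨(he x (by simp [hx])).1, ?_⟩
    obtain ⟨j, h1, h2, rfl⟩ := mem_iff_ent.1 hx
    have := key j h1 h2
    have hcard : ascCard d (u.take (j-1)) ≤ j - 1 := by
      calc ascCard d (u.take (j-1)) ≤ (u.take (j-1)).length := ascCard_le_length _ _
        _ ≤ j - 1 := by simp [List.length_take]
    omega
  · intro i hi
    obtain ⟨h1, h2⟩ := Finset.mem_Icc.1 hi
    exact key i h1 h2

lemma nonasc_bound (d : ℕ) (w : List ℕ) (hw : IsDAscSeq d w) :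
    ∀ i, 2 ≤ i → i ≤ w.length → ¬ (ent w (i-1) < ent w i + d) →
      ent w i ≤ ascCard d (w.take (i-1)) := by
  intro i
  induction i using Nat.strong_induction_on with
  | _ i ih =>
    intro h2 hlen hna
    have hprev : ent w (i-1) ≤ 1 + ascCard d (w.take (i-1-1)) :=
      hw.2 (i-1) (Finset.mem_Icc.2 ⟨by omega, by omega⟩)
    by_cases hA : (i - 1 = 1 ∨ ent w (i-1-1) < ent w (i-1) + d)
    · -- i-1 is a d-ascent: ascCard (take (i-1)) ≥ ascCard (take (i-2)) + 1
      have hmem : (i-1) ∈ ascSet d (w.take (i-1)) :=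
        mem_ascSet_take.2 ⟨by omega, le_rfl, by omega, hA⟩
      have hnot : (i-1) ∉ ascSet d (w.take (i-1-1)) := by
        intro hcon
        have := (mem_ascSet_take.1 hcon).2.1
        omega
      have hsub : insert (i-1) (ascSet d (w.take (i-1-1))) ⊆ ascSet d (w.take (i-1)) := by
        intro x hx
        rcases Finset.mem_insert.1 hx with rfl | hx'
        · exact hmem
        · exact ascSet_take_mono (by omega) hx'
      have hcard : ascCard d (w.take (i-1-1)) + 1 ≤ ascCard d (w.take (i-1)) := by
        have := Finset.card_le_card hsub
        rwa [Finset.card_insert_of_notMem hnot] at this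
      unfold ascCard at *
      omega
    · -- i-1 is not a d-ascent: use strong induction
      push_neg at hA
      obtain ⟨hA1, hA2⟩ := hA
      have h21 : 2 ≤ i - 1 := by omega
      have := ih (i-1) (by omega) h21 (by omega) (by omega)
      have hmono : ascCard d (w.take (i-1-1)) ≤ ascCard d (w.take (i-1)) :=
        Finset.card_le_card (ascSet_take_mono (by omega))
      unfold ascCard at *
      omega

lemma main_ind (d : ℕ) (w : List ℕ) (hw : IsDAscSeq d w) :
    (∀ x, x ∈ hatd d w ↔ 1 ≤ x ∧ x ≤ ascCard d w) ∧
      ascSet d w = nubSet (hatd d w) := by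
  induction w using List.reverseRecOn with
  | nil =>
    have hasc : ascSet d ([] : List ℕ) = ∅ := by
      ext i
      rw [mem_ascSet]
      simp
      intro h1 h2
      omega
    have hhat : hatd d ([] : List ℕ) = [] := by
      unfold hatd
      rw [hasc, Finset.sort_empty, List.foldl_nil]
    constructor
    · intro x
      rw [hhat]
      simp [ascCard, hasc]
      omega
    · rw [hhat, hasc]
      ext i
      rw [mem_nubSet]
      simp
      intro h1 h2
      omega
  | append_singleton u b ih =>
    have hu : IsDAscSeq d u := isDAscSeq_prefix hw
    obtain ⟨Hmem, Hnub⟩ := ih hu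
    set k := ascCard d u with hk
    set h' := hatd d u with hh
    have hlenh : h'.length = u.length := length_hatd d u
    have hb1 : 1 ≤ b := (hw.1 b (by simp)).1
    have hb2 : b ≤ 1 + k := by
      have := hw.2 (u.length + 1) (Finset.mem_Icc.2 ⟨by omega, by simp⟩)
      rwa [ent_append_last, show u.length + 1 - 1 = u.length by omega,
        List.take_left] at this
    have entpos : ∀ j, 1 ≤ j → j ≤ u.length → 1 ≤ ent h' j :=
      fun j hj1 hj2 => ((Hmem _).1 (ent_mem h' j hj1 (by omega))).1
    by_cases hc : u.length = 0 ∨ ent u u.length < b + d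
    · -- the last position is a d-ascent
      have hasc : ascSet d (u ++ [b]) = insert (u.length + 1) (ascSet d u) := by
        rw [ascSet_append, if_pos hc]
      have hnotin : u.length + 1 ∉ ascSet d u := fun h => by
        have := (ascSet_bound h).2; omega
      have hcard : ascCard d (u ++ [b]) = k + 1 := by
        unfold ascCard
        rw [hasc, Finset.card_insert_of_notMem hnotin]
        rfl
      have hhat : hatd d (u ++ [b]) = plus h' b ++ [b] := by
        rw [hatd_append, if_pos hc]
      have lenP : (plus h' b ++ [b]).length = u.length + 1 := by
        simp [length_plus, hlenh]
      have entP_last : ent (plus h' b ++ [b]) (u.length + 1) = b := by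
        have := ent_append_last (plus h' b) b
        rwa [length_plus, hlenh] at this
      have entP_left : ∀ j, 1 ≤ j → j ≤ u.length →
          ent (plus h' b ++ [b]) j =
            if b ≤ ent h' j then ent h' j + 1 else ent h' j := by
        intro j hj1 hj2
        rw [ent_append_left _ _ j hj1 (by rw [length_plus, hlenh]; exact hj2),
          ent_plus _ _ j hj1 (by rw [hlenh]; exact hj2)]
      have fne : ∀ j, 1 ≤ j → j ≤ u.length → ent (plus h' b ++ [b]) j ≠ b := by
        intro j hj1 hj2
        rw [entP_left j hj1 hj2]
        have := entpos j hj1 hj2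
        split <;> omega
      constructor
      · intro x
        rw [hhat, hcard]
        exact mem_plusApp_iff Hmem hb1 (by omega) x
      · rw [hhat, hasc]
        ext i
        rw [Finset.mem_insert, mem_nubSet]
        simp only [lenP]
        constructor
        · rintro (rfl | hmem)
          · refine ⟨⟨by omega, le_rfl⟩, ?_⟩
            intro j hj1 hj2 hje
            rcases Nat.lt_or_ge j (u.length + 1) with hj | hj
            · exact absurd (by rw [hje, entP_last]) (fne j hj1 (by omega))
            · omega
          · obtain ⟨hi1, hi2⟩ := ascSet_bound hmem
            have hmem' := hmem
            rw [Hnub, mem_nubSet] at hmem'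
            obtain ⟨⟨_, hi2'⟩, hcond⟩ := hmem'
            refine ⟨⟨hi1, by omega⟩, ?_⟩
            intro j hj1 hj2 hje
            rcases Nat.lt_or_ge j (u.length + 1) with hj | hj
            · have hj2' : j ≤ u.length := by omega
              rw [entP_left j hj1 hj2', entP_left i hi1 hi2] at hje
              have heq : ent h' j = ent h' i := by
                have e1 := entpos j hj1 hj2'
                have e2 := entpos i hi1 hi2
                split at hje <;> split at hje <;> omega
              exact hcond j hj1 (by rw [hlenh]; exact hj2') heq
            · omega
        · rintro ⟨⟨hi1, hi2⟩, hcond⟩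
          rcases Nat.lt_or_ge i (u.length + 1) with hi | hi
          · right
            rw [Hnub, mem_nubSet]
            have hi2'' : i ≤ u.length := by omega
            refine ⟨⟨hi1, by rw [hlenh]; omega⟩, ?_⟩
            intro j hj1 hj2 hje
            rw [hlenh] at hj2
            refine hcond j hj1 (by omega) ?_
            rw [entP_left j hj1 hj2, entP_left i hi1 hi2'', hje]
          · left; omega
    · -- the last position is not a d-ascent
      push_neg at hc
      obtain ⟨hc1, hc2⟩ := hc
      have hble : b ≤ k := by
        have hna : ¬ (ent (u ++ [b]) (u.length + 1 - 1) <
            ent (u ++ [b]) (u.length + 1) + d) := by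
          rw [show u.length + 1 - 1 = u.length by omega, ent_append_last,
            ent_append_left u [b] u.length (by omega) le_rfl]
          omega
        have := nonasc_bound d (u ++ [b]) hw (u.length + 1)
          (by omega) (by simp) hna
        rwa [ent_append_last, show u.length + 1 - 1 = u.length by omega,
          List.take_left] at this
      have hasc : ascSet d (u ++ [b]) = ascSet d u := by
        rw [ascSet_append, if_neg]
        push_neg
        exact ⟨hc1, by omega⟩
      have hcard : ascCard d (u ++ [b]) = k := by
        unfold ascCard
        rw [hasc]
        rfl
      have hhat : hatd d (u ++ [b]) = h' ++ [b] := by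
        rw [hatd_append, if_neg]
        push_neg
        exact ⟨hc1, by omega⟩
      have lenQ : (h' ++ [b]).length = u.length + 1 := by simp [hlenh]
      have entQ_left : ∀ j, 1 ≤ j → j ≤ u.length → ent (h' ++ [b]) j = ent h' j :=
        fun j hj1 hj2 => ent_append_left h' [b] j hj1 (by omega)
      have entQ_last : ent (h' ++ [b]) (u.length + 1) = b := by
        have := ent_append_last h' b
        rwa [hlenh] at this
      obtain ⟨j0, hj01, hj02, hj0e⟩ := mem_iff_ent.1 ((Hmem b).2 ⟨hb1, hble⟩)
      rw [hlenh] at hj02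
      constructor
      · intro x
        rw [hhat, hcard]
        simp only [List.mem_append, List.mem_singleton]
        constructor
        · rintro (hx | rfl)
          · exact (Hmem x).1 hx
          · exact ⟨hb1, hble⟩
        · intro hx
          exact Or.inl ((Hmem x).2 hx)
      · rw [hhat, hasc]
        ext i
        rw [mem_nubSet]
        simp only [lenQ]
        constructor
        · intro hmem
          obtain ⟨hi1, hi2⟩ := ascSet_bound hmem
          have hmem' := hmem
          rw [Hnub, mem_nubSet] at hmem'
          obtain ⟨_, hcond⟩ := hmem'
          refine ⟨⟨hi1, by omega⟩, ?_⟩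
          intro j hj1 hj2 hje
          rcases Nat.lt_or_ge j (u.length + 1) with hj | hj
          · have hj2' : j ≤ u.length := by omega
            rw [entQ_left j hj1 hj2', entQ_left i hi1 hi2] at hje
            exact hcond j hj1 (by rw [hlenh]; exact hj2') hje
          · omega
        · rintro ⟨⟨hi1, hi2⟩, hcond⟩
          rcases Nat.lt_or_ge i (u.length + 1) with hi | hi
          · rw [Hnub, mem_nubSet]
            have hi2'' : i ≤ u.length := by omega
            refine ⟨⟨hi1, by rw [hlenh]; omega⟩, ?_⟩
            intro j hj1 hj2 hje
            rw [hlenh] at hj2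
            refine hcond j hj1 (by omega) ?_
            rw [entQ_left j hj1 hj2, entQ_left i hi1 hi2'', hje]
          · exfalso
            have hieq : i = u.length + 1 := by omega
            have := hcond j0 hj01 (by omega) (by
              rw [entQ_left j0 hj01 hj02, hieq, entQ_last, hj0e])
            omega
/-- for every `d ≥ 0` and every `d`-ascent sequence `α`, the word
`hat_d(α)` is a Cayley permutation with `Asc_d(α) = nub(hat_d(α))` and
`asc_d(α) = max(hat_d(α))`. -/
theorem stmt3 (d : ℕ) (w : List ℕ) (hw : IsDAscSeq d w) :
    IsCayley (hatd d w) ∧ ascSet d w = nubSet (hatd d w) ∧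
    ascCard d w = maxEnt (hatd d w) := by
  obtain ⟨hmem, hnub⟩ := main_ind d w hw
  have hmax : maxEnt (hatd d w) = ascCard d w := maxEnt_eq' hmem
  refine ⟨?_, hnub, hmax.symm⟩
  intro x
  rw [hmax]
  exact hmem x
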